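/- arXiv:cond-mat/0202339 — 7 statements merged into one kernel-verified Lean document; each statement's English description precedes it below -/
import Mathlib

section
/- Let f₀₀, f₁₀ be real numbers with f₁₀ ≠ 0 and a := -f₀₀/(2f₁₀) > 0. Define F : ℝ → ℝ by F(s) = 2·f₀₀·√a·e^{a s²}·∫_{√a·s}^{∞} e^{-t²} dt. Then for every natural number N, as s → ∞, F(s) - ∑_{n=0}^{N} (2n-1)!!·f₁₀ⁿ·f₀₀^{1-n}·s^{-2n-1} = O(s^{-2N-3}). -/
/-!
Integrating by parts against `t e^{-t²} dt = d(-e^{-t²}/2)` gives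
`∫_x^∞ e^{-t²}/t^{2k} = e^{-x²}/(2x^{2k+1}) - (2k+1)/2 · ∫_x^∞ e^{-t²}/t^{2k+2}`. Iterating yields the
alternating expansion of `e^{x²} ∫_x^∞ e^{-t²} dt` with remainder
`± (2N+1)!!/2^{N+1} · e^{x²} ∫_x^∞ e^{-t²}/t^{2N+2}`, and comparing the integrand with
`t e^{-t²}/x^{2N+3}` bounds the remainder by a constant times `x^{-2N-3}`. Since `f₀₀ = -2a f₁₀`,
the substitution `x = √a s` turns `2 f₀₀ √a` times the `n`-th term into
`(2n-1)!! f₁₀ⁿ f₀₀^{1-n} s^{-2n-1}`.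
-/

open MeasureTheory Real Filter Set Asymptotics Topology

/-- `(2n-1)!! = ∏_{i<n} (2i+1)`; these are the terms of the asymptotic expansion of
`e^{x²} ∫_x^∞ e^{-t²} dt = (√π / 2) e^{x²} erfc x`. -/
noncomputable def erfcAsymptoticTerm (n : ℕ) (x : ℝ) : ℝ :=
  (-1) ^ n * (∏ i ∈ Finset.range n, (2 * (i : ℝ) + 1)) / (2 ^ (n + 1) * x ^ (2 * n + 1))

lemma hasDerivAt_exp_neg_sq (t : ℝ) :
    HasDerivAt (fun u : ℝ => exp (-u ^ 2)) (-2 * t * exp (-t ^ 2)) t := by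
  simpa [mul_comm] using ((hasDerivAt_pow 2 t).neg).exp

lemma tendsto_exp_neg_sq_atTop : Tendsto (fun u : ℝ => exp (-u ^ 2)) atTop (𝓝 0) :=
  tendsto_exp_atBot.comp (tendsto_neg_atTop_atBot.comp (tendsto_pow_atTop two_ne_zero))

lemma integrableOn_Ioi_exp_neg_sq_div_pow {x : ℝ} (hx : 0 < x) (m : ℕ) :
    IntegrableOn (fun t => exp (-t ^ 2) / t ^ m) (Ioi x) := by
  have hgauss : Integrable (fun t : ℝ => exp (-t ^ 2) / x ^ m) := by
    simpa using (integrable_exp_neg_mul_sq one_pos).div_const (x ^ m)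
  refine hgauss.integrableOn.mono' (by fun_prop : Measurable _).aestronglyMeasurable ?_
  filter_upwards [ae_restrict_mem measurableSet_Ioi] with t ht
  rw [norm_of_nonneg (by positivity [hx.trans ht])]
  gcongr
  exact ht.le

lemma integral_Ioi_mul_exp_neg_sq (x : ℝ) : ∫ t in Ioi x, t * exp (-t ^ 2) = exp (-x ^ 2) / 2 := by
  have hderiv (t : ℝ) (_ : t ∈ Ici x) :
      HasDerivAt (fun u : ℝ => -(exp (-u ^ 2) / 2)) (t * exp (-t ^ 2)) t :=
    ((hasDerivAt_exp_neg_sq t).div_const 2).neg.congr_deriv (by ring)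
  have hint : IntegrableOn (fun t : ℝ => t * exp (-t ^ 2)) (Ioi x) := by
    simpa using (integrable_mul_exp_neg_mul_sq one_pos).integrableOn
  have hlim : Tendsto (fun u : ℝ => -(exp (-u ^ 2) / 2)) atTop (𝓝 0) := by
    simpa using (tendsto_exp_neg_sq_atTop.div_const 2).neg
  rw [integral_Ioi_of_hasDerivAt_of_tendsto' hderiv hint hlim]
  ring

lemma integral_Ioi_exp_neg_sq_div_pow_eq {x : ℝ} (hx : 0 < x) (k : ℕ) :
    ∫ t in Ioi x, exp (-t ^ 2) / t ^ (2 * k) =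
      exp (-x ^ 2) / (2 * x ^ (2 * k + 1)) -
        (2 * k + 1) / 2 * ∫ t in Ioi x, exp (-t ^ 2) / t ^ (2 * k + 2) := by
  have hderiv (t : ℝ) (ht : t ∈ Ici x) :
      HasDerivAt (fun u : ℝ => -(exp (-u ^ 2) / (2 * u ^ (2 * k + 1))))
        (exp (-t ^ 2) / t ^ (2 * k) + (2 * k + 1) / 2 * (exp (-t ^ 2) / t ^ (2 * k + 2))) t := by
    have ht0 : t ≠ 0 := (hx.trans_le ht).ne'
    refine (((hasDerivAt_exp_neg_sq t).div ((hasDerivAt_pow (2 * k + 1) t).const_mul 2)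
      (by positivity)).neg).congr_deriv ?_
    field_simp
    push_cast
    ring
  have hint := integrableOn_Ioi_exp_neg_sq_div_pow hx (2 * k)
  have hint' := (integrableOn_Ioi_exp_neg_sq_div_pow hx (2 * k + 2)).const_mul ((2 * k + 1) / 2)
  have hlim : Tendsto (fun u : ℝ => -(exp (-u ^ 2) / (2 * u ^ (2 * k + 1)))) atTop (𝓝 0) := by
    have hpow := (tendsto_pow_atTop (2 * k).succ_ne_zero).const_mul_atTop (two_pos (α := ℝ))
    simpa [div_eq_mul_inv] using (tendsto_exp_neg_sq_atTop.mul hpow.inv_tendsto_atTop).neg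
  have hibp := integral_Ioi_of_hasDerivAt_of_tendsto' hderiv (hint.add hint') hlim
  rw [integral_add hint hint', integral_const_mul] at hibp
  linarith

lemma integral_Ioi_exp_neg_sq_div_pow_le {x : ℝ} (hx : 0 < x) (m : ℕ) :
    ∫ t in Ioi x, exp (-t ^ 2) / t ^ m ≤ exp (-x ^ 2) / (2 * x ^ (m + 1)) := by
  have hint : IntegrableOn (fun t : ℝ => t * exp (-t ^ 2) / x ^ (m + 1)) (Ioi x) := by
    simpa using ((integrable_mul_exp_neg_mul_sq one_pos).div_const (x ^ (m + 1))).integrableOn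
  calc ∫ t in Ioi x, exp (-t ^ 2) / t ^ m
      ≤ ∫ t in Ioi x, t * exp (-t ^ 2) / x ^ (m + 1) := by
        refine setIntegral_mono_on (integrableOn_Ioi_exp_neg_sq_div_pow hx m) hint
          measurableSet_Ioi fun t ht => ?_
        have ht0 : 0 < t := hx.trans ht
        rw [div_le_div_iff₀ (by positivity) (by positivity)]
        calc exp (-t ^ 2) * x ^ (m + 1) ≤ exp (-t ^ 2) * t ^ (m + 1) := by gcongr; exact ht.le
          _ = t * exp (-t ^ 2) * t ^ m := by ring
    _ = exp (-x ^ 2) / (2 * x ^ (m + 1)) := by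
        rw [integral_div, integral_Ioi_mul_exp_neg_sq, div_div]

lemma integral_Ioi_exp_neg_sq_eq_sum_add {x : ℝ} (hx : 0 < x) (N : ℕ) :
    ∫ t in Ioi x, exp (-t ^ 2) =
      exp (-x ^ 2) * ∑ n ∈ Finset.range (N + 1), erfcAsymptoticTerm n x +
        (-1) ^ (N + 1) * (∏ i ∈ Finset.range (N + 1), (2 * (i : ℝ) + 1)) / 2 ^ (N + 1) *
          ∫ t in Ioi x, exp (-t ^ 2) / t ^ (2 * N + 2) := by
  induction N with
  | zero =>
    have h := integral_Ioi_exp_neg_sq_div_pow_eq hx 0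
    simp only [mul_zero, pow_zero, div_one] at h
    rw [h]
    simp [erfcAsymptoticTerm]
    ring
  | succ N ih =>
    rw [ih, show 2 * N + 2 = 2 * (N + 1) by ring, integral_Ioi_exp_neg_sq_div_pow_eq hx (N + 1),
      Finset.sum_range_succ (n := N + 1), Finset.prod_range_succ (n := N + 1),
      erfcAsymptoticTerm]
    push_cast
    ring

theorem isBigO_exp_sq_mul_integral_Ioi_exp_neg_sq_sub_sum (N : ℕ) :
    (fun x : ℝ => exp (x ^ 2) * (∫ t in Ioi x, exp (-t ^ 2)) -
        ∑ n ∈ Finset.range (N + 1), erfcAsymptoticTerm n x)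
      =O[atTop] fun x : ℝ => x ^ (-2 * (N : ℤ) - 3) := by
  set c : ℝ := (∏ i ∈ Finset.range (N + 1), (2 * (i : ℝ) + 1)) / 2 ^ (N + 1)
  have hc : 0 ≤ c := by positivity
  refine IsBigO.of_bound (c / 2) ?_
  filter_upwards [eventually_gt_atTop 0] with x hx
  have hR₀ : 0 ≤ ∫ t in Ioi x, exp (-t ^ 2) / t ^ (2 * N + 2) :=
    setIntegral_nonneg measurableSet_Ioi fun t ht => by positivity [hx.trans ht]
  have hR : ∫ t in Ioi x, exp (-t ^ 2) / t ^ (2 * N + 2) ≤ exp (-x ^ 2) / (2 * x ^ (2 * N + 3)) :=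
    integral_Ioi_exp_neg_sq_div_pow_le hx (2 * N + 2)
  have hexp : exp (x ^ 2) * exp (-x ^ 2) = 1 := by rw [← exp_add]; simp
  have hrem : exp (x ^ 2) * (∫ t in Ioi x, exp (-t ^ 2)) -
        ∑ n ∈ Finset.range (N + 1), erfcAsymptoticTerm n x =
      (-1) ^ (N + 1) * c * (exp (x ^ 2) * ∫ t in Ioi x, exp (-t ^ 2) / t ^ (2 * N + 2)) := by
    rw [integral_Ioi_exp_neg_sq_eq_sum_add hx N, ← mul_assoc, mul_add, ← mul_assoc, hexp]
    ring
  have hzpow : x ^ (-2 * (N : ℤ) - 3) = (x ^ (2 * N + 3))⁻¹ := by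
    rw [← zpow_natCast, ← zpow_neg]
    push_cast
    ring_nf
  rw [hrem, hzpow, norm_mul, norm_mul, norm_pow, norm_neg, norm_one, one_pow, one_mul,
    norm_of_nonneg hc, norm_of_nonneg (by positivity), norm_inv, norm_pow, norm_of_nonneg hx.le]
  calc c * (exp (x ^ 2) * ∫ t in Ioi x, exp (-t ^ 2) / t ^ (2 * N + 2))
      ≤ c * (exp (x ^ 2) * (exp (-x ^ 2) / (2 * x ^ (2 * N + 3)))) := by gcongr
    _ = c / 2 * (x ^ (2 * N + 3))⁻¹ := by rw [mul_div_assoc', hexp]; field_simp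

lemma mul_erfcAsymptoticTerm_sqrt_mul {f00 f10 a s : ℝ} (ha : 0 < a) (hf10 : f10 ≠ 0)
    (had : a = -f00 / (2 * f10)) (hs : s ≠ 0) (n : ℕ) :
    2 * f00 * √a * erfcAsymptoticTerm n (√a * s) =
      (∏ i ∈ Finset.range n, (2 * (i : ℝ) + 1)) * f10 ^ n * f00 ^ (1 - (n : ℤ)) *
        s ^ (-2 * (n : ℤ) - 1) := by
  have hf00 : f00 = -(2 * a * f10) := by
    rw [had]; field_simp
  have hf00ne : f00 ≠ 0 := by
    rw [hf00]; simp [ha.ne', hf10]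
  have hsa : √a ^ (2 * n + 1) = a ^ n * √a := by rw [pow_succ, pow_mul, sq_sqrt ha.le]
  have hsign : (-2 : ℝ) ^ n * (-1) ^ n = 2 ^ n := by rw [← mul_pow]; norm_num
  rw [erfcAsymptoticTerm, zpow_sub₀ hf00ne, zpow_one, zpow_natCast,
    show -2 * (n : ℤ) - 1 = -((2 * n + 1 : ℕ) : ℤ) by push_cast; ring, zpow_neg, zpow_natCast,
    mul_pow, hsa, hf00]
  field_simp
  linear_combination (-(a ^ n * f10 ^ n * 2)) * hsign

/-- Let `f00, f10` be real numbers with `f10 ≠ 0` and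
`a := -f00/(2 f10) > 0`. Define `F s = 2·f00·√a·e^{a s²}·∫_{√a·s}^{∞} e^{-t²} dt`.
Then for every natural number `N`, as `s → ∞`,
`F s - ∑_{n=0}^{N} (2n-1)!!·f10^n·f00^{1-n}·s^{-2n-1} = O(s^{-2N-3})`,
where `(2n-1)!! = ∏_{i=1}^n (2i-1)`. -/
theorem stmt_1 (f00 f10 : ℝ) (hf10 : f10 ≠ 0)
    (a : ℝ) (hadef : a = -f00 / (2 * f10)) (hapos : 0 < a)
    (F : ℝ → ℝ)
    (hF : ∀ s : ℝ, F s = 2 * f00 * Real.sqrt a * Real.exp (a * s ^ 2) *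
        ∫ t in Set.Ioi (Real.sqrt a * s), Real.exp (-t ^ 2)) :
    ∀ N : ℕ,
      (fun s : ℝ => F s - ∑ n ∈ Finset.range (N + 1),
          (∏ i ∈ Finset.range n, (2 * (i : ℝ) + 1)) * f10 ^ n * f00 ^ (1 - (n : ℤ))
            * s ^ (-2 * (n : ℤ) - 1))
        =O[Filter.atTop] fun s : ℝ => s ^ (-2 * (N : ℤ) - 3) := by
  intro N
  have hscale : ∀ᶠ s in atTop, 2 * f00 * √a * (exp ((√a * s) ^ 2) *
      (∫ t in Ioi (√a * s), exp (-t ^ 2)) -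
        ∑ n ∈ Finset.range (N + 1), erfcAsymptoticTerm n (√a * s)) =
      F s - ∑ n ∈ Finset.range (N + 1), (∏ i ∈ Finset.range n, (2 * (i : ℝ) + 1)) * f10 ^ n *
        f00 ^ (1 - (n : ℤ)) * s ^ (-2 * (n : ℤ) - 1) := by
    filter_upwards [eventually_ne_atTop 0] with s hs
    rw [hF, mul_sub, Finset.mul_sum, Finset.sum_congr rfl fun n _ =>
      mul_erfcAsymptoticTerm_sqrt_mul hapos hf10 hadef hs n, mul_pow,
      sq_sqrt hapos.le]
    ring
  have hasymp := (isBigO_exp_sq_mul_integral_Ioi_exp_neg_sq_sub_sum N).comp_tendsto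
    (tendsto_id.const_mul_atTop (sqrt_pos.2 hapos))
  exact ((hasymp.const_mul_left (2 * f00 * √a)).congr' hscale
    (.of_forall fun s => mul_zpow _ _ _)).trans (isBigO_const_mul_self _ _ _)
end

section
/- Let n ≥ 1 and N ≥ 0 be natural numbers and let P be a polynomial over ℚ in the variables y₀, …, y_N, x, q. For a formal power series G in the two variables x and ε over ℚ, write G = ∑_{i≥0} gᵢ(x)·εⁱ with gᵢ(x) ∈ ℚ⟦x⟧, let Ĝⱼ denote the series obtained from G by substituting (1-ε)ʲ·x for x, and set H(G) = P(Ĝ₀, Ĝ₁, …, Ĝ_N, x, 1-ε) ∈ ℚ⟦x, ε⟧. If G and G' are two such series whose ε-coefficients gᵢ and gᵢ' agree for all i < n, then the ε^n-coefficients of H(G) and H(G') satisfy [εⁿ]H(G) - [εⁿ]H(G') = (gₙ(x) - gₙ'(x)) · (∑_{k=0}^{N} ∂_{y_k}P)(g₀(x), …, g₀(x), x, 1). -/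
/-- The coefficient `gᵢ(x) ∈ ℚ⟦x⟧` of `εⁱ` in a formal power series
`G ∈ ℚ⟦x, ε⟧`, modelled as an element of `(ℚ⟦ε⟧)⟦x⟧`. -/
noncomputable def epsCoeff (i : ℕ) (G : PowerSeries (PowerSeries ℚ)) : PowerSeries ℚ :=
  PowerSeries.mk fun m =>
    PowerSeries.coeff i (PowerSeries.coeff m G)

/-- `H(G) = P(Ĝ₀, Ĝ₁, …, Ĝ_N, x, 1-ε)`, where `Ĝⱼ` is obtained from `G` by
substituting `(1-ε)ʲ·x` for `x`.  Variables: `Sum.inl k` is `y_k`, `Sum.inr 0`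
is `x` and `Sum.inr 1` is `q`. -/
noncomputable def qSubst (N : ℕ) (P : MvPolynomial (Fin (N + 1) ⊕ Fin 2) ℚ)
    (G : PowerSeries (PowerSeries ℚ)) : PowerSeries (PowerSeries ℚ) :=
  MvPolynomial.aeval
    (Sum.elim
      (fun k : Fin (N + 1) =>
        PowerSeries.rescale ((1 - PowerSeries.X : PowerSeries ℚ) ^ (k : ℕ)) G)
      (fun j : Fin 2 =>
        if j = 0 then PowerSeries.X
        else PowerSeries.C (1 - PowerSeries.X))) P

/-- Evaluation of a polynomial in the variables `y₀, …, y_N, x, q` at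
`(g₀(x), …, g₀(x), x, 1)`, as an element of `ℚ⟦x⟧`. -/
noncomputable def diagEval (N : ℕ) (g0 : PowerSeries ℚ)
    (Q : MvPolynomial (Fin (N + 1) ⊕ Fin 2) ℚ) : PowerSeries ℚ :=
  MvPolynomial.aeval
    (Sum.elim (fun _ : Fin (N + 1) => g0)
      (fun j : Fin 2 => if j = 0 then PowerSeries.X else 1)) Q

/-! Write `G - G' = εⁿ·D`. The arguments `Ĝⱼ` of `P` then move by `εⁿ·D̂ⱼ` while `x` and
`1 - ε` stay fixed, so by first-order Taylor expansion `H(G) - H(G')` equals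
`εⁿ·∑ₖ D̂ₖ·∂_{y_k}P(Ĝ')` modulo `ε²ⁿ`, which has no `εⁿ` coefficient since `n ≥ 1`. Taking
the `εⁿ` coefficient of `εⁿ·F` amounts to setting `ε = 0` in `F`, which turns `D̂ₖ` into
`gₙ - gₙ'` and `Ĝ'ₖ` into `g₀' = g₀`. -/

namespace MvPolynomial

variable {R A σ : Type*} [CommSemiring R] [CommRing A] [Algebra R A]

theorem aeval_sub_aeval_mem {J : Ideal A} {a b : σ → A} (hab : ∀ k, b k - a k ∈ J)
    (P : MvPolynomial σ R) : aeval b P - aeval a P ∈ J := by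
  rw [← Ideal.Quotient.eq, ← Ideal.Quotient.mkₐ_eq_mk R, ← AlgHom.comp_apply, ← AlgHom.comp_apply,
    comp_aeval, comp_aeval]
  congr 2
  funext k
  exact Ideal.Quotient.eq.2 (hab k)

theorem aeval_sub_aeval_sub_sum_pderiv_mem [Fintype σ] [DecidableEq σ] {J : Ideal A}
    {a b : σ → A} (hab : ∀ k, b k - a k ∈ J) (P : MvPolynomial σ R) :
    aeval b P - aeval a P - ∑ k, (b k - a k) * aeval a (pderiv k P) ∈ J ^ 2 := by
  induction P using MvPolynomial.induction_on with
  | C r => simp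
  | add p q hp hq =>
    convert add_mem hp hq using 1
    simp only [map_add, mul_add, Finset.sum_add_distrib]
    ring
  | mul_X p i hp =>
    have hsum : ∑ k, (b k - a k) * aeval a (pderiv k (p * X i))
        = (∑ k, (b k - a k) * aeval a (pderiv k p)) * a i + (b i - a i) * aeval a p := by
      simp only [pderiv_mul, pderiv_X, map_add, map_mul, aeval_X, mul_add,
        Finset.sum_add_distrib, Finset.sum_mul]
      simp [Pi.single_apply, mul_assoc]
    have hstep : aeval b (p * X i) - aeval a (p * X i)
          - ∑ k, (b k - a k) * aeval a (pderiv k (p * X i))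
        = a i * (aeval b p - aeval a p - ∑ k, (b k - a k) * aeval a (pderiv k p))
          + (aeval b p - aeval a p) * (b i - a i) := by
      rw [hsum]
      simp only [map_mul, aeval_X]
      ring
    rw [hstep]
    refine add_mem (Ideal.mul_mem_left _ _ hp) ?_
    rw [pow_two]
    exact Ideal.mul_mem_mul (aeval_sub_aeval_mem hab p) (hab i)

end MvPolynomial

namespace PowerSeries

theorem rescale_C {R : Type*} [CommSemiring R] (a r : R) : rescale a (C r) = C r := by
  ext n
  rcases n with _ | n <;> simp [coeff_rescale, coeff_C]

end PowerSeries

open PowerSeries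

theorem epsCoeff_sub (i : ℕ) (F G : PowerSeries (PowerSeries ℚ)) :
    epsCoeff i (F - G) = epsCoeff i F - epsCoeff i G := by
  ext m
  simp [epsCoeff]

theorem epsCoeff_zero_eq_map (F : PowerSeries (PowerSeries ℚ)) :
    epsCoeff 0 F = map constantCoeff F := by
  ext m
  simp [epsCoeff, coeff_map, coeff_zero_eq_constantCoeff]

theorem epsCoeff_C_X_pow_mul (i m : ℕ) (F : PowerSeries (PowerSeries ℚ)) :
    epsCoeff (i + m) (C (X ^ m) * F) = epsCoeff i F := by
  ext k
  simp only [epsCoeff, coeff_mk, coeff_C_mul, coeff_X_pow_mul]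

theorem epsCoeff_C_X_pow_mul_self (m : ℕ) (F : PowerSeries (PowerSeries ℚ)) :
    epsCoeff m (C (X ^ m) * F) = epsCoeff 0 F := by
  simpa only [zero_add] using epsCoeff_C_X_pow_mul 0 m F

theorem epsCoeff_C_X_pow_mul_of_lt {i m : ℕ} (h : i < m) (F : PowerSeries (PowerSeries ℚ)) :
    epsCoeff i (C (X ^ m) * F) = 0 := by
  ext k
  simp only [epsCoeff, coeff_mk, coeff_C_mul, coeff_X_pow_mul', if_neg h.not_ge, map_zero]

theorem exists_eq_C_X_pow_mul_of_epsCoeff_eq_zero {n : ℕ} {F : PowerSeries (PowerSeries ℚ)}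
    (h : ∀ i < n, epsCoeff i F = 0) : ∃ D, F = C (X ^ n) * D := by
  refine ⟨mk fun m => mk fun i => coeff (i + n) (coeff m F), ?_⟩
  ext m i
  rw [coeff_C_mul, coeff_X_pow_mul']
  split_ifs with hni
  · simp [Nat.sub_add_cancel hni]
  · simpa [epsCoeff] using congr_arg (coeff m) (h i (not_le.1 hni))

theorem epsCoeff_zero_rescale {u : PowerSeries ℚ} (hu : constantCoeff u = 1)
    (F : PowerSeries (PowerSeries ℚ)) : epsCoeff 0 (rescale u F) = epsCoeff 0 F := by
  ext m
  simp [epsCoeff, coeff_rescale, hu]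

theorem epsCoeff_aeval_sub_aeval {σ : Type*} [Fintype σ] [DecidableEq σ] {n : ℕ} (hn : 1 ≤ n)
    {a b d : σ → PowerSeries (PowerSeries ℚ)} (hd : ∀ k, b k - a k = C (X ^ n) * d k)
    (P : MvPolynomial σ ℚ) :
    epsCoeff n (MvPolynomial.aeval b P) - epsCoeff n (MvPolynomial.aeval a P)
      = epsCoeff 0 (∑ k, d k * MvPolynomial.aeval a (MvPolynomial.pderiv k P)) := by
  have hab : ∀ k, b k - a k ∈ Ideal.span {C (X ^ n)} := fun k =>
    Ideal.mem_span_singleton'.2 ⟨d k, (mul_comm _ _).trans (hd k).symm⟩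
  obtain ⟨u, hu⟩ := Ideal.mem_span_singleton'.1 <| by
    simpa only [Ideal.span_singleton_pow] using
      MvPolynomial.aeval_sub_aeval_sub_sum_pderiv_mem hab P
  have hlin : ∑ k, (b k - a k) * MvPolynomial.aeval a (MvPolynomial.pderiv k P)
      = C (X ^ n) * ∑ k, d k * MvPolynomial.aeval a (MvPolynomial.pderiv k P) := by
    simp only [hd, Finset.mul_sum, mul_assoc]
  have hsplit : MvPolynomial.aeval b P - MvPolynomial.aeval a P
      = C (X ^ n) *
        (∑ k, d k * MvPolynomial.aeval a (MvPolynomial.pderiv k P) + C (X ^ n) * u) := by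
    linear_combination hlin - hu
  rw [← epsCoeff_sub, hsplit, epsCoeff_C_X_pow_mul_self, epsCoeff_zero_eq_map, map_add,
    ← epsCoeff_zero_eq_map, ← epsCoeff_zero_eq_map, epsCoeff_C_X_pow_mul_of_lt hn, add_zero]

noncomputable def qPoint (N : ℕ) (G : PowerSeries (PowerSeries ℚ)) :
    Fin (N + 1) ⊕ Fin 2 → PowerSeries (PowerSeries ℚ) :=
  Sum.elim (fun k : Fin (N + 1) => rescale ((1 - X : PowerSeries ℚ) ^ (k : ℕ)) G)
    (fun j : Fin 2 => if j = 0 then X else C (1 - X))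

theorem qSubst_eq_aeval (N : ℕ) (P : MvPolynomial (Fin (N + 1) ⊕ Fin 2) ℚ)
    (G : PowerSeries (PowerSeries ℚ)) : qSubst N P G = MvPolynomial.aeval (qPoint N G) P :=
  rfl

theorem epsCoeff_zero_aeval_qPoint (N : ℕ) (G : PowerSeries (PowerSeries ℚ))
    (Q : MvPolynomial (Fin (N + 1) ⊕ Fin 2) ℚ) :
    epsCoeff 0 (MvPolynomial.aeval (qPoint N G) Q) = diagEval N (epsCoeff 0 G) Q := by
  rw [epsCoeff_zero_eq_map, ← RingHom.toRatAlgHom_apply, ← AlgHom.comp_apply,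
    MvPolynomial.comp_aeval, diagEval]
  congr 2
  funext v
  rcases v with k | j
  · simp [qPoint, ← epsCoeff_zero_eq_map, epsCoeff_zero_rescale]
  · simp only [qPoint, Sum.elim_inr, RingHom.toRatAlgHom_apply]
    split_ifs <;> simp

/-- If the `ε`-coefficients of `G` and `G'` agree below order `n`,
then `[εⁿ]H(G) - [εⁿ]H(G') = (gₙ - gₙ')·(∑_k ∂_{y_k}P)(g₀, …, g₀, x, 1)`. -/
theorem stmt_2 (n N : ℕ) (hn : 1 ≤ n)
    (P : MvPolynomial (Fin (N + 1) ⊕ Fin 2) ℚ)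
    (G G' : PowerSeries (PowerSeries ℚ))
    (hagree : ∀ i < n, epsCoeff i G = epsCoeff i G') :
    epsCoeff n (qSubst N P G) - epsCoeff n (qSubst N P G')
      = (epsCoeff n G - epsCoeff n G') *
          diagEval N (epsCoeff 0 G)
            (∑ k : Fin (N + 1), MvPolynomial.pderiv (Sum.inl k) P) := by
  obtain ⟨D, hD⟩ : ∃ D, G - G' = C (X ^ n) * D :=
    exists_eq_C_X_pow_mul_of_epsCoeff_eq_zero fun i hi => by
      rw [epsCoeff_sub, hagree i hi, sub_self]
  have hDn : epsCoeff 0 D = epsCoeff n G - epsCoeff n G' := by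
    rw [← epsCoeff_sub, hD, epsCoeff_C_X_pow_mul_self]
  have hd : ∀ v, qPoint N G v - qPoint N G' v
      = C (X ^ n) * Sum.elim (fun k : Fin (N + 1) => rescale ((1 - X) ^ (k : ℕ)) D) 0 v := by
    rintro (k | j)
    · simp only [qPoint, Sum.elim_inl, ← map_sub, hD, map_mul, rescale_C]
    · simp [qPoint]
  rw [qSubst_eq_aeval, qSubst_eq_aeval, epsCoeff_aeval_sub_aeval hn hd, Fintype.sum_sum_type]
  simp only [Sum.elim_inl, Sum.elim_inr, Pi.zero_apply, zero_mul, Finset.sum_const_zero, add_zero]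
  rw [epsCoeff_zero_eq_map, map_sum, diagEval, map_sum, Finset.mul_sum]
  refine Finset.sum_congr rfl fun k _ => ?_
  rw [map_mul, ← epsCoeff_zero_eq_map, ← epsCoeff_zero_eq_map, epsCoeff_zero_rescale (by simp),
    hDn, epsCoeff_zero_aeval_qPoint, ← hagree 0 hn, diagEval]
end

section
/- Let t₀ > 0 and let y : ℝ → ℝ be twice differentiable with y''(t) = t·y(t) and y(t) > 0 for all t ≥ t₀, and suppose y(t) → 0 as t → ∞. Then y'(t)/(√t · y(t)) → -1 as t → ∞. -/
/-!
The logarithmic derivative `w = -y'/y` of the recessive solution satisfies the Riccati equation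
`w' = w² - t`, and `w > 0` because `y' < 0` (`y'` increases, so `y' ≥ 0` somewhere would stop `y`
from decaying). The curves `a √t` are barriers for this equation: once `w` drops below `a √t` with
`a < 1`, it stays there and `w' ≤ (a² - 1) t` drives `w` negative; once `w` rises above `a √t`
with `a > 1` (at a late enough time), it stays there and `(1/w)' = t/w² - 1 ≤ 1/a² - 1` drives
`1/w` negative. Hence `w / √t → 1`.
-/

open Filter Set Real Topology

lemma image_le_of_hasDerivAt_lt_boundary_Ici {f f' B B' : ℝ → ℝ} {a : ℝ}
    (hf : ∀ x ≥ a, HasDerivAt f (f' x) x) (hB : ∀ x ≥ a, HasDerivAt B (B' x) x)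
    (ha : f a ≤ B a) (bound : ∀ x ≥ a, f x = B x → f' x < B' x) {x : ℝ} (hx : a ≤ x) :
    f x ≤ B x :=
  image_le_of_deriv_right_lt_deriv_boundary' (b := x)
    (fun y hy => (hf y hy.1).continuousAt.continuousWithinAt)
    (fun y hy => (hf y hy.1).hasDerivWithinAt) ha
    (fun y hy => (hB y hy.1).continuousAt.continuousWithinAt)
    (fun y hy => (hB y hy.1).hasDerivWithinAt) (fun y hy => bound y hy.1) ⟨hx, le_rfl⟩

lemma tendsto_atBot_of_hasDerivAt_le_neg {f f' : ℝ → ℝ} {a c : ℝ} (hc : 0 < c)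
    (hf : ∀ x ≥ a, HasDerivAt f (f' x) x) (hf' : ∀ x ≥ a, f' x ≤ -c) :
    Tendsto f atTop atBot := by
  have hlin : ∀ x ≥ a, f x ≤ f a + -c * (x - a) := fun x hx => by
    have := (convex_Ici a).image_sub_le_mul_sub_of_deriv_le
      (fun y hy => (hf y hy).continuousAt.continuousWithinAt)
      (fun y hy => (hf y (interior_subset hy)).differentiableAt.differentiableWithinAt)
      (fun y hy => (hf y (interior_subset hy)).deriv ▸ hf' y (interior_subset hy))
      a self_mem_Ici x hx hx
    linarith
  refine tendsto_atBot_mono' _ ((eventually_ge_atTop a).mono hlin) ?_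
  refine tendsto_atBot_add_const_left _ _ (Tendsto.const_mul_atTop_of_neg (neg_neg_of_pos hc) ?_)
  exact tendsto_atTop_add_const_right _ _ tendsto_id

lemma deriv_neg_of_monotoneOn_of_tendsto_zero {y y' : ℝ → ℝ} {t0 : ℝ}
    (hy : ∀ t ≥ t0, HasDerivAt y (y' t) t) (hy' : MonotoneOn y' (Ici t0))
    (hpos : ∀ t ≥ t0, 0 < y t) (hlim : Tendsto y atTop (𝓝 0)) {t : ℝ} (ht : t0 ≤ t) :
    y' t < 0 := by
  by_contra! h
  have hmono : MonotoneOn y (Ici t) :=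
    monotoneOn_of_hasDerivWithinAt_nonneg (convex_Ici t)
      (fun s hs => (hy s (ht.trans hs)).continuousAt.continuousWithinAt)
      (fun s hs => (hy s (ht.trans (interior_subset hs))).hasDerivWithinAt)
      (fun s hs => h.trans (hy' ht (ht.trans (interior_subset hs)) (interior_subset hs)))
  obtain ⟨s, hs, hts⟩ :=
    ((hlim.eventually (gt_mem_nhds (hpos t ht))).and (eventually_ge_atTop t)).exists
  exact (hmono self_mem_Ici hts hts).not_gt hs

lemma hasDerivAt_neg_div_riccati {y y' : ℝ → ℝ} {q t : ℝ} (hy : HasDerivAt y (y' t) t)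
    (hy' : HasDerivAt y' (q * y t) t) (ht : y t ≠ 0) :
    HasDerivAt (fun s => -y' s / y s) ((-y' t / y t) ^ 2 - q) t :=
  (hy'.fun_neg.fun_div hy ht).congr_deriv (by field_simp; ring)

section Riccati

variable {w : ℝ → ℝ} {t0 : ℝ} (hw : ∀ t ≥ t0, HasDerivAt w (w t ^ 2 - t) t)
  (hpos : ∀ t ≥ t0, 0 < w t)
include hw hpos

lemma mul_sqrt_lt_of_riccati (ht0 : 0 < t0) {a : ℝ} (ha0 : 0 ≤ a) (ha1 : a < 1) {t : ℝ}
    (ht : t0 ≤ t) : a * √t < w t := by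
  by_contra! hle
  have ha2 : a ^ 2 < 1 := by nlinarith
  have hs_pos : ∀ s ≥ t, 0 < s := fun s hs => ht0.trans_le (ht.trans hs)
  have hw' : ∀ s ≥ t, HasDerivAt w (w s ^ 2 - s) s := fun s hs => hw s (ht.trans hs)
  have hbelow : ∀ s ≥ t, w s ≤ a * √s := fun s hs =>
    image_le_of_hasDerivAt_lt_boundary_Ici hw'
      (fun s hs => (hasDerivAt_sqrt (hs_pos s hs).ne').const_mul a) hle
      (fun s hs heq => by
        have : 0 ≤ a * (1 / (2 * √s)) := by positivity
        rw [heq, mul_pow, sq_sqrt (hs_pos s hs).le]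
        nlinarith [mul_lt_mul_of_pos_right ha2 (hs_pos s hs)]) hs
  have hdecay : ∀ s ≥ t, w s ^ 2 - s ≤ -((1 - a ^ 2) * t) := fun s hs => by
    have : w s ^ 2 ≤ a ^ 2 * s :=
      calc w s ^ 2 ≤ (a * √s) ^ 2 := pow_le_pow_left₀ (hpos s (ht.trans hs)).le (hbelow s hs) 2
        _ = a ^ 2 * s := by rw [mul_pow, sq_sqrt (hs_pos s hs).le]
    nlinarith [mul_le_mul_of_nonneg_left hs (sub_pos.2 ha2).le]
  have hc : 0 < (1 - a ^ 2) * t := mul_pos (sub_pos.2 ha2) (hs_pos t le_rfl)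
  obtain ⟨s, hs, hts⟩ := (((tendsto_atBot_of_hasDerivAt_le_neg hc hw' hdecay).eventually_lt_atBot
    0).and (eventually_ge_atTop t)).exists
  exact hs.not_gt (hpos s (ht.trans hts))

lemma eventually_lt_mul_sqrt_of_riccati {a : ℝ} (ha : 1 < a) : ∀ᶠ t in atTop, w t < a * √t := by
  have hgap : ∀ᶠ t in atTop, a / 2 < (a ^ 2 - 1) * t :=
    (tendsto_id.const_mul_atTop (by nlinarith)).eventually_gt_atTop _
  obtain ⟨T, hT⟩ :=
    eventually_atTop.1 (hgap.and ((eventually_ge_atTop t0).and (eventually_ge_atTop 1)))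
  filter_upwards [eventually_ge_atTop T] with t ht
  by_contra! hle
  have hgap' : ∀ s ≥ t, a / 2 < (a ^ 2 - 1) * s := fun s hs => (hT s (ht.trans hs)).1
  have ht0' : ∀ s ≥ t, t0 ≤ s := fun s hs => (hT s (ht.trans hs)).2.1
  have hone : ∀ s ≥ t, 1 ≤ s := fun s hs => (hT s (ht.trans hs)).2.2
  have hw' : ∀ s ≥ t, HasDerivAt w (w s ^ 2 - s) s := fun s hs => hw s (ht0' s hs)
  have habove : ∀ s ≥ t, a * √s ≤ w s := fun s hs =>
    image_le_of_hasDerivAt_lt_boundary_Ici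
      (fun s hs => (hasDerivAt_sqrt (one_pos.trans_le (hone s hs)).ne').const_mul a) hw' hle
      (fun s hs heq => by
        have : a * (1 / (2 * √s)) ≤ a / 2 := by
          rw [mul_one_div]
          exact div_le_div_of_nonneg_left (by linarith) two_pos
            (by linarith [one_le_sqrt.2 (hone s hs)])
        rw [← heq, mul_pow, sq_sqrt (zero_le_one.trans (hone s hs))]
        linarith [hgap' s hs]) hs
  have hinv : ∀ s ≥ t, HasDerivAt (fun s => (w s)⁻¹) (-(w s ^ 2 - s) / w s ^ 2) s :=
    fun s hs => (hw' s hs).inv (hpos s (ht0' s hs)).ne'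
  have hdecay : ∀ s ≥ t, -(w s ^ 2 - s) / w s ^ 2 ≤ -(1 - (a ^ 2)⁻¹) := fun s hs => by
    have hws : a ^ 2 * s ≤ w s ^ 2 :=
      calc a ^ 2 * s = (a * √s) ^ 2 := by rw [mul_pow, sq_sqrt (zero_le_one.trans (hone s hs))]
        _ ≤ w s ^ 2 := pow_le_pow_left₀ (by positivity) (habove s hs) 2
    have : s ≤ (a ^ 2)⁻¹ * w s ^ 2 := by
      rw [← div_eq_inv_mul, le_div_iff₀ (by positivity)]
      linarith
    rw [div_le_iff₀ (pow_pos (hpos s (ht0' s hs)) 2)]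
    nlinarith
  have hc : 0 < 1 - (a ^ 2)⁻¹ := sub_pos.2 (inv_lt_one_of_one_lt₀ (one_lt_pow₀ ha two_ne_zero))
  obtain ⟨s, hs, hts⟩ := (((tendsto_atBot_of_hasDerivAt_le_neg hc hinv hdecay).eventually_lt_atBot
    0).and (eventually_ge_atTop t)).exists
  exact hs.not_gt (inv_pos.2 (hpos s (ht0' s hts)))

theorem tendsto_div_sqrt_of_riccati (ht0 : 0 < t0) :
    Tendsto (fun t => w t / √t) atTop (𝓝 1) := by
  refine tendsto_order.2 ⟨fun b hb => ?_, fun b hb => ?_⟩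
  · filter_upwards [eventually_ge_atTop t0] with t ht
    have hlow := mul_sqrt_lt_of_riccati hw hpos ht0 (le_max_right b 0) (max_lt hb one_pos) ht
    rw [lt_div_iff₀ (sqrt_pos.2 (ht0.trans_le ht))]
    exact (mul_le_mul_of_nonneg_right (le_max_left b 0) (sqrt_nonneg t)).trans_lt hlow
  · filter_upwards [eventually_lt_mul_sqrt_of_riccati hw hpos hb, eventually_gt_atTop 0]
      with t ht htpos
    rwa [div_lt_iff₀ (sqrt_pos.2 htpos)]

end Riccati

/-- Let `t₀ > 0` and let `y : ℝ → ℝ` be twice differentiable with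
`y'' t = t · y t` (encoded via `yd = y'`) and `y t > 0` for all `t ≥ t₀`, and suppose
`y t → 0` as `t → ∞`. Then `y' t / (√t · y t) → -1` as `t → ∞`. -/
theorem stmt_5 (t0 : ℝ) (ht0 : 0 < t0)
    (y yd : ℝ → ℝ)
    (hy : ∀ t, HasDerivAt y (yd t) t)
    (hyd : ∀ t, HasDerivAt yd (t * y t) t)
    (hpos : ∀ t, t0 ≤ t → 0 < y t)
    (hlim : Filter.Tendsto y Filter.atTop (nhds 0)) :
    Filter.Tendsto (fun t => yd t / (Real.sqrt t * y t)) Filter.atTop (nhds (-1)) := by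
  have hyd_mono : MonotoneOn yd (Ici t0) :=
    monotoneOn_of_hasDerivWithinAt_nonneg (convex_Ici t0)
      (fun t _ => (hyd t).continuousAt.continuousWithinAt) (fun t _ => (hyd t).hasDerivWithinAt)
      (fun t ht => mul_nonneg (ht0.le.trans (interior_subset ht))
        (hpos t (interior_subset ht)).le)
  have hyd_neg : ∀ t ≥ t0, yd t < 0 := fun t ht =>
    deriv_neg_of_monotoneOn_of_tendsto_zero (fun s _ => hy s) hyd_mono hpos hlim ht
  have hw : ∀ t ≥ t0, HasDerivAt (fun s => -yd s / y s) ((-yd t / y t) ^ 2 - t) t :=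
    fun t ht => hasDerivAt_neg_div_riccati (hy t) (hyd t) (hpos t ht).ne'
  have hwpos : ∀ t ≥ t0, 0 < -yd t / y t := fun t ht =>
    div_pos (neg_pos.2 (hyd_neg t ht)) (hpos t ht)
  refine (tendsto_div_sqrt_of_riccati hw hwpos ht0).neg.congr' ?_
  filter_upwards with t
  rw [neg_div, neg_div, neg_neg, div_div, mul_comm]
end

section
/- Let f₀₀, f₁₀ be real numbers with f₁₀ ≠ 0 and a := -f₀₀/(2f₁₀) > 0. Define F : ℝ → ℝ by F(s) = 2·f₀₀·√a·e^{a s²}·∫_{√a·s}^{∞} e^{-t²} dt. Then for every real s, s·F(s) + (f₁₀/f₀₀)·F'(s) - f₀₀ = 0. -/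
/-!
Write `F = 2 f₀₀ √a · G` with `G s = e^{a s²} ∫_{√a s}^∞ e^{-t²} dt`. Differentiating the tail
integral at its lower limit gives `G' s = 2 a s · G s - √a`, the boundary term collapsing because
`e^{a s²} e^{-(√a s)²} = 1`. Since `2 a f₁₀ = -f₀₀`, substituting `F'` into the equation leaves
`2 √a s G s · (f₀₀ + 2 a f₁₀) - (2 a f₁₀ + f₀₀) = 0`.
-/

open MeasureTheory Real Set

theorem hasDerivAt_integral_Ioi {E : Type*} [NormedAddCommGroup E] [NormedSpace ℝ E]
    [CompleteSpace E] {f : ℝ → E} {x : ℝ} (hf : Integrable f) (hx : ContinuousAt f x) :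
    HasDerivAt (fun y => ∫ t in Ioi y, f t) (-f x) x := by
  have hsplit : (fun y => ∫ t in Ioi y, f t) = fun y => (∫ t in Ioi 0, f t) - ∫ t in 0..y, f t :=
    funext fun y => eq_sub_of_add_eq' <|
      intervalIntegral.integral_interval_add_Ioi hf.integrableOn hf.integrableOn
  rw [hsplit]
  exact (intervalIntegral.integral_hasDerivAt_right hf.intervalIntegrable
    hf.aestronglyMeasurable.stronglyMeasurableAtFilter hx).const_sub _

theorem hasDerivAt_exp_mul_sq_mul_integral_Ioi_exp_neg_sq {c : ℝ} (hc : 0 ≤ c) (s : ℝ) :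
    HasDerivAt (fun s => exp (c * s ^ 2) * ∫ t in Ioi (√c * s), exp (-t ^ 2))
      (2 * c * s * (exp (c * s ^ 2) * ∫ t in Ioi (√c * s), exp (-t ^ 2)) - √c) s := by
  have hgauss : Integrable fun t : ℝ => exp (-t ^ 2) := by
    simpa using integrable_exp_neg_mul_sq one_pos
  have htail : HasDerivAt (fun s => ∫ t in Ioi (√c * s), exp (-t ^ 2))
      (-exp (-(√c * s) ^ 2) * √c) s := by
    have := (hasDerivAt_integral_Ioi hgauss (by fun_prop)).comp s
      ((hasDerivAt_id' s).const_mul √c)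
    rwa [mul_one] at this
  have hexp : HasDerivAt (fun s => exp (c * s ^ 2)) (exp (c * s ^ 2) * (c * (2 * s))) s := by
    simpa using ((hasDerivAt_pow 2 s).const_mul c).exp
  have hcancel : exp (c * s ^ 2) * exp (-(√c * s) ^ 2) = 1 := by
    rw [← exp_add, mul_pow, sq_sqrt hc, add_neg_cancel, exp_zero]
  exact (hexp.mul htail).congr_deriv (by linear_combination -√c * hcancel)

theorem stmt_6_general (f00 f10 : ℝ)
    (a : ℝ) (hadef : a = -f00 / (2 * f10)) (hapos : 0 < a)
    (F : ℝ → ℝ)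
    (hF : ∀ s : ℝ, F s = 2 * f00 * Real.sqrt a * Real.exp (a * s ^ 2) *
        ∫ t in Set.Ioi (Real.sqrt a * s), Real.exp (-t ^ 2)) :
    ∀ s : ℝ, s * F s + (f10 / f00) * deriv F s - f00 = 0 := by
  intro s
  have hf10 : f10 ≠ 0 := by rintro rfl; simp [hadef] at hapos
  have hf00 : f00 ≠ 0 := by rintro rfl; simp [hadef] at hapos
  have ha : 2 * a * f10 = -f00 := by rw [hadef]; field_simp
  have hFeq : F = fun s => 2 * f00 * √a *
      (exp (a * s ^ 2) * ∫ t in Ioi (√a * s), exp (-t ^ 2)) :=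
    funext fun s => (hF s).trans (mul_assoc _ _ _)
  rw [hFeq, ((hasDerivAt_exp_mul_sq_mul_integral_Ioi_exp_neg_sq hapos.le s).const_mul _).deriv]
  have hr : f10 / f00 * f00 = f10 := div_mul_cancel₀ f10 hf00
  have hsq : √a * √a = a := mul_self_sqrt hapos.le
  dsimp only
  generalize exp (a * s ^ 2) * ∫ t in Ioi (√a * s), exp (-t ^ 2) = G
  linear_combination
    (2 * √a * s * G - 1) * ha + 2 * √a * (2 * a * s * G - √a) * hr - 2 * f10 * hsq

/-- Let `f00, f10 ∈ ℝ` with `f10 ≠ 0` and `a := -f00/(2 f10) > 0`.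
Define `F s = 2·f00·√a·e^{a s²}·∫_{√a·s}^{∞} e^{-t²} dt`. Then for every real `s`,
`s·F s + (f10/f00)·F' s - f00 = 0`. -/
theorem stmt_6 (f00 f10 : ℝ) (hf10 : f10 ≠ 0)
    (a : ℝ) (hadef : a = -f00 / (2 * f10)) (hapos : 0 < a)
    (F : ℝ → ℝ)
    (hF : ∀ s : ℝ, F s = 2 * f00 * Real.sqrt a * Real.exp (a * s ^ 2) *
        ∫ t in Set.Ioi (Real.sqrt a * s), Real.exp (-t ^ 2)) :
    ∀ s : ℝ, s * F s + (f10 / f00) * deriv F s - f00 = 0 :=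
  stmt_6_general f00 f10 a hadef hapos F hF
end

section
/- In the ring ℚ[q]⟦x⟧ of formal power series in x with coefficients in the polynomial ring ℚ[q], let G = ∑_{m≥1} ∑_{n≥1} q^{m·n}·x^{m+n}, and let G(qx) denote the series obtained from G by the substitution x ↦ q·x. Then q·x²·(1 - q·x)·G(qx) - (1 - q·x)·G + q·x²·(1 + q·x) = 0. -/
/-!
Peeling off the first row and the first column maps an `m × n` rectangle with `m, n ≥ 2` to an
`(m-1) × (n-1)` rectangle, lowering the half-perimeter `k` by 2 and the area by `k - 1`; the
remaining rectangles of half-perimeter `k ≥ 3` are the two strips `1 × (k-1)` and `(k-1) × 1`.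
Hence `G = q x² (G(qx) + 1) + 2 q² x³ / (1 - qx)`, and clearing the denominator gives the
identity.
-/

open scoped PowerSeries

/-- The half-perimeter and area generating function of rectangles,
`G = ∑_{m≥1} ∑_{n≥1} q^{m·n}·x^{m+n}`, as a formal power series in `x` with
coefficients in `ℚ[q]`: the coefficient of `x^k` is `∑_{m=1}^{k-1} q^{m·(k-m)}`. -/
noncomputable def rectGF : PowerSeries (Polynomial ℚ) :=
  PowerSeries.mk fun k => ∑ m ∈ Finset.Ioo 0 k, (Polynomial.X : Polynomial ℚ) ^ (m * (k - m))

open Finset PowerSeries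

theorem sum_Ioo_pow_mul_sub_add_three {R : Type*} [Semiring R] (a : R) (k : ℕ) :
    ∑ m ∈ Ioo 0 (k + 3), a ^ (m * (k + 3 - m))
      = a ^ (k + 2) * (∑ m ∈ Ioo 0 (k + 1), a ^ (m * (k + 1 - m)) + 2) := by
  have hIoo : ∀ n, Ioo 0 n = Ico 1 n := fun n => rfl
  rw [hIoo, hIoo, sum_eq_sum_Ico_succ_bot (by omega), sum_Ico_succ_top (by omega),
    ← sum_Ico_add' _ 1 (k + 1) 1, mul_add, mul_sum]
  have hpeel : ∀ m ∈ Ico 1 (k + 1),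
      a ^ ((m + 1) * (k + 3 - (m + 1))) = a ^ (k + 2) * a ^ (m * (k + 1 - m)) := by
    intro m hm
    obtain ⟨d, rfl⟩ : ∃ d, k = m + d := ⟨k - m, by simp at hm; omega⟩
    rw [← pow_add]; congr 1
    rw [show m + d + 3 - (m + 1) = d + 2 by omega, show m + d + 1 - m = d + 1 by omega]; ring
  rw [sum_congr rfl hpeel, show k + 3 - (k + 2) = 1 by omega, show k + 3 - 1 = k + 2 by omega]
  simp only [one_mul, mul_one, mul_two]
  abel

theorem rescale_mk_one_mul_one_sub_eq_one {R : Type*} [CommRing R] (a : R) :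
    rescale a (mk 1 : R⟦X⟧) * (1 - C a * X) = 1 := by
  simpa [rescale_X] using congrArg (rescale a) (mk_one_mul_one_sub_eq_one R)

theorem rectGF_eq_rescale :
    rectGF = C (Polynomial.X : Polynomial ℚ) * X ^ 2 * (rescale Polynomial.X rectGF + 1)
      + 2 * C Polynomial.X ^ 2 * X ^ 3 * rescale Polynomial.X (mk 1) := by
  rw [show (2 : (Polynomial ℚ)⟦X⟧) * C Polynomial.X ^ 2 = C (2 * Polynomial.X ^ 2) by
    rw [map_mul, map_pow, map_ofNat]]
  refine PowerSeries.ext fun k => ?_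
  simp only [rectGF, rescale_mk]
  simp only [map_add, mul_assoc, coeff_C_mul, coeff_X_pow_mul', coeff_mk, coeff_one, Pi.one_apply]
  rcases k with _ | _ | _ | k
  · simp
  · simp [show Ioo 0 1 = ∅ from rfl]
  · simp [show Ioo 0 2 = {1} by rfl]
  · simp only [show 2 ≤ k + 3 by omega, show 3 ≤ k + 3 by omega, if_true,
      show k + 3 - 2 = k + 1 by omega, show k + 3 - 3 = k by omega,
      sum_Ioo_pow_mul_sub_add_three, Nat.add_one_ne_zero, if_false]
    ring

/-- With `G` the rectangle generating function and `G(qx)` obtained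
from `G` by the substitution `x ↦ q·x`, we have
`q·x²·(1 - q·x)·G(qx) - (1 - q·x)·G + q·x²·(1 + q·x) = 0` in `ℚ[q]⟦x⟧`. -/
theorem stmt_13 :
    PowerSeries.C (R := Polynomial ℚ) Polynomial.X * PowerSeries.X ^ 2 *
        (1 - PowerSeries.C (R := Polynomial ℚ) Polynomial.X * PowerSeries.X) *
        PowerSeries.rescale Polynomial.X rectGF
      - (1 - PowerSeries.C (R := Polynomial ℚ) Polynomial.X * PowerSeries.X) * rectGF
      + PowerSeries.C (R := Polynomial ℚ) Polynomial.X * PowerSeries.X ^ 2 *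
        (1 + PowerSeries.C (R := Polynomial ℚ) Polynomial.X * PowerSeries.X) = 0 := by
  linear_combination (C Polynomial.X * X - 1) * rectGF_eq_rescale
    - 2 * C Polynomial.X ^ 2 * X ^ 3 *
      rescale_mk_one_mul_one_sub_eq_one (Polynomial.X : Polynomial ℚ)
end

section
/- In the ring ℚ[q]⟦x⟧ of formal power series in x with coefficients in the polynomial ring ℚ[q], let G = ∑_{λ} q^{|λ|}·x^{ℓ(λ)+λ₁}, where the sum is over all nonempty integer partitions λ, with |λ| the sum of the parts, ℓ(λ) the number of parts, and λ₁ the largest part; let G(qx) denote the series obtained from G by the substitution x ↦ q·x. Then q·x²·G(qx) - (1 - q·x)²·G + q·x² = 0. -/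
/-!
Write `g_k ∈ ℚ[q]` for the coefficient of `x^k` in `G`. Comparing coefficients, the identity says
`g_0 = g_1 = 0`, `g_2 = q` and `g_k + q² g_{k-2} = 2q g_{k-1} + q^{k-1} g_{k-2}` for `k ≥ 3`.

Encode a Ferrers diagram by the multiset of its row lengths and sort the diagrams of
half-perimeter `k ≥ 3` by whether the longest row is unique (B) and whether some row has length
one (C). Shortening the unique longest row, resp. deleting a row of length one, is a bijection from
B, resp. C, onto the diagrams of half-perimeter `k - 1` with one cell fewer; doing both maps B ∩ C
bijectively onto half-perimeter `k - 2` with two cells fewer. A diagram in neither B nor C keeps a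
Ferrers diagram of half-perimeter `k - 2` when its outer hook (`k - 1` cells) is removed, and this
is again a bijection. Inclusion–exclusion over B and C gives the recurrence.
-/

/-- The half-perimeter and area generating function of Ferrers diagrams,
`G = ∑_λ q^{|λ|}·x^{ℓ(λ)+λ₁}`, the sum being over all nonempty integer
partitions `λ`, as a formal power series in `x` with coefficients in `ℚ[q]`:
the coefficient of `x^k` is `∑_j #{λ ⊢ j : ℓ(λ) + λ₁ = k}·q^j` (a finite sum,
since `ℓ(λ)·λ₁ ≥ |λ|` forces `|λ| ≤ k²`). -/
noncomputable def ferrersGF : PowerSeries (Polynomial ℚ) :=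
  PowerSeries.mk fun k =>
    ∑ j ∈ Finset.Icc 1 (k * k),
      ((Finset.univ.filter fun lam : Nat.Partition j =>
          Multiset.card lam.parts + lam.parts.sup = k).card : ℚ) •
        (Polynomial.X : Polynomial ℚ) ^ j

open scoped Finset

namespace Multiset

section LinearOrder

variable {α : Type*} [LinearOrder α] [OrderBot α] {s r : Multiset α} {a : α}

theorem sup_mem_of_ne_zero (hs : s ≠ 0) : s.sup ∈ s := by
  induction s using Multiset.induction_on with
  | empty => exact absurd rfl hs
  | cons a s ih =>
    rw [sup_cons]
    rcases eq_or_ne s 0 with rfl | hs'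
    · simp
    rcases le_total a s.sup with h | h
    · rw [sup_eq_right.mpr h]
      exact mem_cons_of_mem (ih hs')
    · rw [sup_eq_left.mpr h]
      exact mem_cons_self a s

theorem sup_cons_of_forall_le (h : ∀ x ∈ r, x ≤ a) : (a ::ₘ r).sup = a := by
  rw [sup_cons, sup_eq_left, Multiset.sup_le]
  exact h

theorem exists_eq_cons_forall_le_of_ne_zero (hs : s ≠ 0) :
    ∃ a r, s = a ::ₘ r ∧ ∀ x ∈ r, x ≤ a :=
  ⟨s.sup, s.erase s.sup, (cons_erase (sup_mem_of_ne_zero hs)).symm,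
    fun _ hx => le_sup (mem_of_mem_erase hx)⟩

theorem exists_eq_cons_forall_lt_of_count_sup_eq_one (hs : s.count s.sup = 1) :
    ∃ a r, s = a ::ₘ r ∧ ∀ x ∈ r, x < a := by
  have hmem : s.sup ∈ s := count_pos.mp (by omega)
  refine ⟨s.sup, s.erase s.sup, (cons_erase hmem).symm, fun x hx => ?_⟩
  refine lt_of_le_of_ne (le_sup (mem_of_mem_erase hx)) ?_
  rintro rfl
  rw [← count_pos, count_erase_self, hs] at hx
  exact lt_irrefl 0 hx

theorem exists_eq_cons_cons_forall_le_of_two_le_count_sup (hs : 2 ≤ s.count s.sup) :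
    ∃ a r, s = a ::ₘ a ::ₘ r ∧ ∀ x ∈ r, x ≤ a := by
  have hmem : s.sup ∈ s := count_pos.mp (by omega)
  have hmem' : s.sup ∈ s.erase s.sup := by
    rw [← count_pos, count_erase_self]
    omega
  refine ⟨s.sup, (s.erase s.sup).erase s.sup, ?_,
    fun _ hx => le_sup (mem_of_mem_erase (mem_of_mem_erase hx))⟩
  rw [cons_erase hmem', cons_erase hmem]

end LinearOrder

theorem map_add_one_map_sub_one {s : Multiset ℕ} (h : ∀ x ∈ s, 0 < x) :
    (s.map (· - 1)).map (· + 1) = s := by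
  rw [map_map]
  conv_rhs => rw [← map_id s]
  exact map_congr rfl fun x hx => Nat.sub_add_cancel (h x hx)

theorem map_sub_one_map_add_one (s : Multiset ℕ) : (s.map (· + 1)).map (· - 1) = s := by
  simp [map_map]

theorem sum_map_add_one (s : Multiset ℕ) : (s.map (· + 1)).sum = s.sum + card s := by
  simp [sum_map_add]

theorem sum_map_sub_one_add_card {s : Multiset ℕ} (h : ∀ x ∈ s, 0 < x) :
    (s.map (· - 1)).sum + card s = s.sum := by
  conv_rhs => rw [← map_add_one_map_sub_one h]
  rw [sum_map_add_one, card_map]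

end Multiset

def ferrers (k n : ℕ) : Finset (Multiset ℕ) :=
  (Finset.univ.filter fun p : n.Partition => Multiset.card p.parts + p.parts.sup = k).map
    ⟨Nat.Partition.parts, fun _ _ => Nat.Partition.ext⟩

section Ferrers

open Multiset

variable {k n : ℕ}

theorem mem_ferrers {s : Multiset ℕ} :
    s ∈ ferrers k n ↔ (∀ i ∈ s, 0 < i) ∧ s.sum = n ∧ card s + s.sup = k := by
  simp only [ferrers, Finset.mem_map, Finset.mem_filter, Finset.mem_univ, true_and]
  constructor
  · rintro ⟨p, hk, rfl⟩
    exact ⟨fun _ => p.parts_pos, p.parts_sum, hk⟩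
  · rintro ⟨hpos, hsum, hk⟩
    exact ⟨⟨s, hpos _, hsum⟩, hk, rfl⟩

theorem cons_mem_ferrers_iff {a : ℕ} {r : Multiset ℕ} (hr : ∀ x ∈ r, x ≤ a) :
    a ::ₘ r ∈ ferrers k n ↔ 0 < a ∧ (∀ x ∈ r, 0 < x) ∧ a + r.sum = n ∧ card r + 1 + a = k := by
  rw [mem_ferrers, sup_cons_of_forall_le hr, forall_mem_cons, sum_cons, card_cons, and_assoc]

theorem ne_zero_of_mem_ferrers (hk : k ≠ 0) {s : Multiset ℕ} (hs : s ∈ ferrers k n) : s ≠ 0 := by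
  rintro rfl
  simp [mem_ferrers] at hs
  omega

theorem ferrers_eq_empty_of_two_mul_lt (h : 2 * n < k) : ferrers k n = ∅ := by
  refine Finset.eq_empty_of_forall_notMem fun s hs => ?_
  obtain ⟨hpos, hsum, hhp⟩ := mem_ferrers.mp hs
  have hcard : card s • 1 ≤ s.sum := card_nsmul_le_sum hpos
  have hsup : s.sup ≤ s.sum := Multiset.sup_le.mpr fun _ hx => le_sum_of_mem hx
  simp only [smul_eq_mul, mul_one] at hcard
  omega

theorem ferrers_eq_empty_of_mul_self_lt (h : k * k < n) : ferrers k n = ∅ := by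
  refine Finset.eq_empty_of_forall_notMem fun s hs => ?_
  obtain ⟨-, hsum, hhp⟩ := mem_ferrers.mp hs
  have hle : s.sum ≤ card s • s.sup := sum_le_card_nsmul s _ fun _ => le_sup
  rw [smul_eq_mul] at hle
  have := Nat.mul_le_mul (show card s ≤ k by omega) (show s.sup ≤ k by omega)
  omega

theorem ferrers_one (n : ℕ) : ferrers 1 n = ∅ := by
  refine Finset.eq_empty_of_forall_notMem fun s hs => ?_
  obtain ⟨hpos, -, hhp⟩ := mem_ferrers.mp hs
  have hs0 := ne_zero_of_mem_ferrers one_ne_zero hs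
  have := card_pos.mpr hs0
  have := hpos _ (sup_mem_of_ne_zero hs0)
  omega

theorem mem_ferrers_two {s : Multiset ℕ} : s ∈ ferrers 2 n ↔ s = {1} ∧ n = 1 := by
  constructor
  · intro hs
    obtain ⟨hpos, hsum, hhp⟩ := mem_ferrers.mp hs
    have hs0 := ne_zero_of_mem_ferrers two_ne_zero hs
    have := card_pos.mpr hs0
    have := hpos _ (sup_mem_of_ne_zero hs0)
    obtain ⟨a, rfl⟩ := card_eq_one.mp (by omega : card s = 1)
    simp only [sup_singleton, card_singleton, sum_singleton] at hhp hsum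
    exact ⟨by rw [show a = 1 by omega], by omega⟩
  · rintro ⟨rfl, rfl⟩
    simp [mem_ferrers]

theorem card_ferrers_two (n : ℕ) : #(ferrers 2 n) = if n = 1 then 1 else 0 := by
  split_ifs with hn
  · exact Finset.card_eq_one.mpr ⟨{1}, Finset.eq_singleton_iff_unique_mem.mpr
      ⟨mem_ferrers_two.mpr ⟨rfl, hn⟩, fun _ hs => (mem_ferrers_two.mp hs).1⟩⟩
  · exact Finset.card_eq_zero.mpr (Finset.eq_empty_of_forall_notMem fun _ hs =>
      hn (mem_ferrers_two.mp hs).2)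

theorem two_le_of_cons_mem_ferrers (hk : 3 ≤ k) {a : ℕ} {r : Multiset ℕ} (hr : ∀ x ∈ r, x < a)
    (hs : a ::ₘ r ∈ ferrers k n) : 2 ≤ a := by
  obtain ⟨ha, hpos, -, hhp⟩ := (cons_mem_ferrers_iff fun x hx => (hr x hx).le).mp hs
  by_contra! ha2
  have hr0 : r = 0 := eq_zero_of_forall_notMem fun x hx => by
    have := hr x hx
    have := hpos x hx
    omega
  simp only [hr0, card_zero] at hhp
  omega

theorem one_cons_mem_ferrers_iff (hk : 2 ≤ k) {t : Multiset ℕ} :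
    1 ::ₘ t ∈ ferrers (k + 1) (n + 1) ↔ t ∈ ferrers k n := by
  rcases eq_or_ne t 0 with rfl | ht
  · simp [mem_ferrers]
    omega
  rw [mem_ferrers, mem_ferrers, forall_mem_cons, sum_cons, card_cons, sup_cons]
  constructor
  · rintro ⟨⟨-, hpos⟩, hsum, hhp⟩
    rw [sup_eq_right.mpr (hpos _ (sup_mem_of_ne_zero ht))] at hhp
    exact ⟨hpos, by omega, by omega⟩
  · rintro ⟨hpos, hsum, hhp⟩
    rw [sup_eq_right.mpr (hpos _ (sup_mem_of_ne_zero ht))]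
    exact ⟨⟨one_pos, hpos⟩, by omega, by omega⟩

theorem exists_eq_cons_one_cons_of_mem_ferrers (hk : 3 ≤ k) {s : Multiset ℕ}
    (hs : s ∈ ferrers k n) (hc : s.count s.sup = 1) (h1 : 1 ∈ s) :
    ∃ a r, s = a ::ₘ 1 ::ₘ r ∧ 2 ≤ a ∧ ∀ x ∈ r, x < a := by
  obtain ⟨a, r, rfl, hr⟩ := exists_eq_cons_forall_lt_of_count_sup_eq_one hc
  have ha := two_le_of_cons_mem_ferrers hk hr hs
  have h1r : 1 ∈ r := (mem_cons.mp h1).resolve_left (by omega)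
  exact ⟨a, r.erase 1, by rw [cons_erase h1r], ha, fun x hx => hr x (mem_of_mem_erase hx)⟩

theorem exists_eq_cons_cons_of_mem_ferrers (hk : k ≠ 0) {s : Multiset ℕ} (hs : s ∈ ferrers k n)
    (hc : s.count s.sup ≠ 1) (h1 : 1 ∉ s) :
    ∃ a r, s = a ::ₘ a ::ₘ r ∧ 2 ≤ a ∧ ∀ x ∈ r, 2 ≤ x ∧ x ≤ a := by
  have : 0 < s.count s.sup := count_pos.mpr (sup_mem_of_ne_zero (ne_zero_of_mem_ferrers hk hs))
  obtain ⟨a, r, rfl, hr⟩ := exists_eq_cons_cons_forall_le_of_two_le_count_sup (s := s) (by omega)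
  have two_le : ∀ x ∈ a ::ₘ a ::ₘ r, 2 ≤ x := fun x hx => by
    have := (mem_ferrers.mp hs).1 x hx
    have : x ≠ 1 := fun h => h1 (h ▸ hx)
    omega
  exact ⟨a, r, rfl, two_le a (mem_cons_self _ _),
    fun x hx => ⟨two_le x (mem_cons_of_mem (mem_cons_of_mem hx)), hr x hx⟩⟩

theorem card_ferrers_filter_count_sup_eq_one (hk : 2 ≤ k) :
    #{s ∈ ferrers (k + 1) (n + 1) | s.count s.sup = 1} = #(ferrers k n) := by
  refine Finset.card_nbij' (fun s => (s.sup - 1) ::ₘ s.erase s.sup)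
    (fun t => (t.sup + 1) ::ₘ t.erase t.sup) ?_ ?_ ?_ ?_
  · intro s hs
    obtain ⟨hs, hc⟩ := Finset.mem_filter.mp hs
    obtain ⟨a, r, rfl, hr⟩ := exists_eq_cons_forall_lt_of_count_sup_eq_one hc
    have ha := two_le_of_cons_mem_ferrers (by omega) hr hs
    obtain ⟨-, hpos, hsum, hhp⟩ := (cons_mem_ferrers_iff fun x hx => (hr x hx).le).mp hs
    simp only [Finset.mem_coe, sup_cons_of_forall_le fun x hx => (hr x hx).le, erase_cons_head,
      cons_mem_ferrers_iff fun x hx => Nat.le_sub_one_of_lt (hr x hx)]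
    exact ⟨by omega, hpos, by omega, by omega⟩
  · intro t ht
    obtain ⟨b, r, rfl, hr⟩ :=
      exists_eq_cons_forall_le_of_ne_zero (ne_zero_of_mem_ferrers (by omega) ht)
    have hr' : ∀ x ∈ r, x < b + 1 := fun x hx => Nat.lt_succ_of_le (hr x hx)
    obtain ⟨hb, hpos, hsum, hhp⟩ := (cons_mem_ferrers_iff hr).mp ht
    simp only [Finset.mem_coe, Finset.mem_filter, sup_cons_of_forall_le hr, erase_cons_head,
      cons_mem_ferrers_iff fun x hx => (hr' x hx).le,
      sup_cons_of_forall_le fun x hx => (hr' x hx).le, count_cons_self,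
      count_eq_zero.mpr fun h => (hr' _ h).false]
    exact ⟨⟨by omega, hpos, by omega, by omega⟩, trivial⟩
  · intro s hs
    obtain ⟨hs, hc⟩ := Finset.mem_filter.mp hs
    obtain ⟨a, r, rfl, hr⟩ := exists_eq_cons_forall_lt_of_count_sup_eq_one hc
    have ha := ((cons_mem_ferrers_iff fun x hx => (hr x hx).le).mp hs).1
    simp only [sup_cons_of_forall_le fun x hx => (hr x hx).le, erase_cons_head,
      sup_cons_of_forall_le fun x hx => Nat.le_sub_one_of_lt (hr x hx), Nat.sub_add_cancel ha]
  · intro t ht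
    obtain ⟨b, r, rfl, hr⟩ :=
      exists_eq_cons_forall_le_of_ne_zero (ne_zero_of_mem_ferrers (by omega) ht)
    simp only [sup_cons_of_forall_le hr, erase_cons_head, Nat.add_sub_cancel,
      sup_cons_of_forall_le fun x hx => (hr x hx).trans (Nat.le_add_right b 1)]

theorem card_ferrers_filter_one_mem (hk : 2 ≤ k) :
    #{s ∈ ferrers (k + 1) (n + 1) | 1 ∈ s} = #(ferrers k n) := by
  refine Finset.card_nbij' (fun s => s.erase 1) (fun t => 1 ::ₘ t) ?_ ?_ ?_ ?_
  · intro s hs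
    obtain ⟨hs, h1⟩ := Finset.mem_filter.mp hs
    rwa [← cons_erase h1, one_cons_mem_ferrers_iff hk] at hs
  · intro t ht
    exact Finset.mem_filter.mpr ⟨(one_cons_mem_ferrers_iff hk).mpr ht, mem_cons_self 1 t⟩
  · intro s hs
    exact cons_erase (Finset.mem_filter.mp hs).2
  · intro t _
    exact erase_cons_head 1 t

theorem card_ferrers_filter_count_sup_eq_one_and_one_mem (hk : 1 ≤ k) :
    #{s ∈ ferrers (k + 2) (n + 2) | s.count s.sup = 1 ∧ 1 ∈ s} = #(ferrers k n) := by
  have hsrc (s) (hs : s ∈ {s ∈ ferrers (k + 2) (n + 2) | s.count s.sup = 1 ∧ 1 ∈ s}) :=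
    let ⟨hs, hc, h1⟩ := Finset.mem_filter.mp hs
    exists_eq_cons_one_cons_of_mem_ferrers (by omega) hs hc h1
  refine Finset.card_nbij' (fun s => (s.sup - 1) ::ₘ (s.erase s.sup).erase 1)
    (fun t => (t.sup + 1) ::ₘ 1 ::ₘ t.erase t.sup) ?_ ?_ ?_ ?_
  · intro s hs
    obtain ⟨a, r, rfl, ha, hr⟩ := hsrc s hs
    have hle : ∀ x ∈ 1 ::ₘ r, x ≤ a := by simpa using ⟨by omega, fun x hx => (hr x hx).le⟩
    obtain ⟨-, hpos, hsum, hhp⟩ := (cons_mem_ferrers_iff hle).mp (Finset.mem_filter.mp hs).1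
    simp only [Finset.mem_coe, sup_cons_of_forall_le hle, erase_cons_head,
      cons_mem_ferrers_iff fun x hx => Nat.le_sub_one_of_lt (hr x hx)]
    simp only [forall_mem_cons, sum_cons, card_cons] at hpos hsum hhp
    exact ⟨by omega, hpos.2, by omega, by omega⟩
  · intro t ht
    obtain ⟨b, r, rfl, hr⟩ :=
      exists_eq_cons_forall_le_of_ne_zero (ne_zero_of_mem_ferrers (by omega) ht)
    obtain ⟨hb, hpos, hsum, hhp⟩ := (cons_mem_ferrers_iff hr).mp ht
    have hle : ∀ x ∈ 1 ::ₘ r, x ≤ b + 1 := by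
      simpa using fun x hx => (hr x hx).trans (Nat.le_add_right b 1)
    have hcount : count (b + 1) r = 0 := count_eq_zero.mpr fun h => by have := hr _ h; omega
    simp only [Finset.mem_coe, Finset.mem_filter, sup_cons_of_forall_le hr, erase_cons_head,
      cons_mem_ferrers_iff hle, sup_cons_of_forall_le hle, count_cons_self,
      count_cons_of_ne (by omega : b + 1 ≠ 1), hcount, forall_mem_cons, sum_cons, card_cons]
    exact ⟨⟨by omega, ⟨one_pos, hpos⟩, by omega, by omega⟩, trivial,
      mem_cons_of_mem (mem_cons_self 1 r)⟩
  · intro s hs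
    obtain ⟨a, r, rfl, ha, hr⟩ := hsrc s hs
    have hle : ∀ x ∈ 1 ::ₘ r, x ≤ a := by simpa using ⟨by omega, fun x hx => (hr x hx).le⟩
    simp only [sup_cons_of_forall_le hle, erase_cons_head,
      sup_cons_of_forall_le fun x hx => Nat.le_sub_one_of_lt (hr x hx),
      Nat.sub_add_cancel (by omega : 1 ≤ a)]
  · intro t ht
    obtain ⟨b, r, rfl, hr⟩ :=
      exists_eq_cons_forall_le_of_ne_zero (ne_zero_of_mem_ferrers (by omega) ht)
    have hle : ∀ x ∈ 1 ::ₘ r, x ≤ b + 1 := by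
      simpa using fun x hx => (hr x hx).trans (Nat.le_add_right b 1)
    simp only [sup_cons_of_forall_le hr, erase_cons_head, sup_cons_of_forall_le hle,
      Nat.add_sub_cancel]

theorem cons_map_sub_one_mem_ferrers {a : ℕ} {r : Multiset ℕ} (ha : 2 ≤ a)
    (hr : ∀ x ∈ r, 2 ≤ x ∧ x ≤ a) (hs : a ::ₘ a ::ₘ r ∈ ferrers (k + 2) n) :
    (a - 1) ::ₘ r.map (· - 1) ∈ ferrers k (n - (k + 1)) := by
  have hle : ∀ x ∈ a ::ₘ r, x ≤ a := by simpa using fun x hx => (hr x hx).2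
  have hle' : ∀ x ∈ r.map (· - 1), x ≤ a - 1 := by
    simpa using fun x hx => Nat.sub_le_sub_right (hr x hx).2 1
  obtain ⟨-, -, hsum, hhp⟩ := (cons_mem_ferrers_iff hle).mp hs
  have hsub := sum_map_sub_one_add_card fun x hx => Nat.zero_lt_of_lt (hr x hx).1
  rw [cons_mem_ferrers_iff hle', forall_mem_map_iff, card_map]
  simp only [sum_cons, card_cons] at hsum hhp
  exact ⟨by omega, fun x hx => by have := hr x hx; omega, by omega, by omega⟩

theorem cons_cons_map_add_one_mem_ferrers {b : ℕ} {r : Multiset ℕ} (hr : ∀ x ∈ r, x ≤ b)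
    (ht : b ::ₘ r ∈ ferrers k (n - (k + 1))) :
    (b + 1) ::ₘ (b + 1) ::ₘ r.map (· + 1) ∈ ferrers (k + 2) n := by
  obtain ⟨hb, hpos, hsum, hhp⟩ := (cons_mem_ferrers_iff hr).mp ht
  have hle : ∀ x ∈ (b + 1) ::ₘ r.map (· + 1), x ≤ b + 1 := by simpa using hr
  rw [cons_mem_ferrers_iff hle]
  simp only [forall_mem_cons, forall_mem_map_iff, sum_cons, sum_map_add_one, card_cons, card_map]
  exact ⟨by omega, ⟨by omega, fun x _ => by omega⟩, by omega, by omega⟩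

theorem card_ferrers_filter_count_sup_ne_one_and_one_notMem (hk : 1 ≤ k) :
    #{s ∈ ferrers (k + 2) n | s.count s.sup ≠ 1 ∧ 1 ∉ s} = #(ferrers k (n - (k + 1))) := by
  have hsrc (s) (hs : s ∈ {s ∈ ferrers (k + 2) n | s.count s.sup ≠ 1 ∧ 1 ∉ s}) :=
    let ⟨hs, hc, h1⟩ := Finset.mem_filter.mp hs
    exists_eq_cons_cons_of_mem_ferrers (by omega) hs hc h1
  refine Finset.card_nbij' (fun s => (s.erase s.sup).map (· - 1))
    (fun t => (t.sup + 1) ::ₘ t.map (· + 1)) ?_ ?_ ?_ ?_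
  · intro s hs
    obtain ⟨a, r, rfl, ha, hr⟩ := hsrc s hs
    have hle : ∀ x ∈ a ::ₘ r, x ≤ a := by simpa using fun x hx => (hr x hx).2
    simp only [Finset.mem_coe, sup_cons_of_forall_le hle, erase_cons_head, map_cons]
    exact cons_map_sub_one_mem_ferrers ha hr (Finset.mem_filter.mp hs).1
  · intro t ht
    obtain ⟨b, r, rfl, hr⟩ :=
      exists_eq_cons_forall_le_of_ne_zero (ne_zero_of_mem_ferrers (by omega) ht)
    obtain ⟨hb, hpos, -, -⟩ := (cons_mem_ferrers_iff hr).mp ht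
    have hle : ∀ x ∈ (b + 1) ::ₘ r.map (· + 1), x ≤ b + 1 := by simpa using hr
    simp only [Finset.mem_coe, Finset.mem_filter, sup_cons_of_forall_le hr, map_cons]
    rw [sup_cons_of_forall_le hle, count_cons_self, count_cons_self, mem_cons, mem_cons, mem_map]
    refine ⟨cons_cons_map_add_one_mem_ferrers hr ht, by omega, ?_⟩
    rintro (h | h | ⟨y, hy, hy1⟩)
    iterate 2 omega
    have := hpos y hy
    omega
  · intro s hs
    obtain ⟨a, r, rfl, ha, hr⟩ := hsrc s hs
    have hle : ∀ x ∈ a ::ₘ r, x ≤ a := by simpa using fun x hx => (hr x hx).2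
    have hle' : ∀ x ∈ r.map (· - 1), x ≤ a - 1 := by
      simpa using fun x hx => Nat.sub_le_sub_right (hr x hx).2 1
    simp only [sup_cons_of_forall_le hle, erase_cons_head, map_cons]
    rw [sup_cons_of_forall_le hle']
    simp only [map_add_one_map_sub_one fun x hx => Nat.zero_lt_of_lt (hr x hx).1,
      Nat.sub_add_cancel (by omega : 1 ≤ a)]
  · intro t ht
    obtain ⟨b, r, rfl, hr⟩ :=
      exists_eq_cons_forall_le_of_ne_zero (ne_zero_of_mem_ferrers (by omega) ht)
    have hle : ∀ x ∈ (b ::ₘ r).map (· + 1), x ≤ b + 1 := by simpa using hr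
    simp only [sup_cons_of_forall_le hr]
    rw [sup_cons_of_forall_le hle, erase_cons_head, map_sub_one_map_add_one]

theorem card_ferrers_add_three (m t : ℕ) :
    #(ferrers (m + 3) (t + 2)) + #(ferrers (m + 1) t) =
      2 * #(ferrers (m + 2) (t + 1)) + #(ferrers (m + 1) (t - m)) := by
  set S := ferrers (m + 3) (t + 2)
  have hB : #{s ∈ S | s.count s.sup = 1} = #(ferrers (m + 2) (t + 1)) :=
    card_ferrers_filter_count_sup_eq_one (by omega)
  have hC : #{s ∈ S | 1 ∈ s} = #(ferrers (m + 2) (t + 1)) :=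
    card_ferrers_filter_one_mem (by omega)
  have hBC : #{s ∈ S | s.count s.sup = 1 ∧ 1 ∈ s} = #(ferrers (m + 1) t) :=
    card_ferrers_filter_count_sup_eq_one_and_one_mem (by omega)
  have hD : #{s ∈ S | s.count s.sup ≠ 1 ∧ 1 ∉ s} = #(ferrers (m + 1) (t - m)) := by
    rw [show t - m = t + 2 - (m + 1 + 1) by omega]
    exact card_ferrers_filter_count_sup_ne_one_and_one_notMem (by omega)
  have hunion := Finset.card_union_add_card_inter {s ∈ S | s.count s.sup = 1} {s ∈ S | 1 ∈ s}
  rw [← Finset.filter_or, ← Finset.filter_and] at hunion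
  have hsplit := Finset.card_filter_add_card_filter_not (s := S) fun s => s.count s.sup = 1 ∨ 1 ∈ s
  simp only [not_or, ← ne_eq] at hsplit
  omega

end Ferrers

theorem coeff_coeff_ferrersGF {k : ℕ} (hk : k ≠ 0) (j : ℕ) :
    (PowerSeries.coeff k ferrersGF).coeff j = #(ferrers k j) := by
  have hcard : ∀ j, #{p : j.Partition | Multiset.card p.parts + p.parts.sup = k} =
      #(ferrers k j) := fun j => (Finset.card_map _).symm
  simp only [ferrersGF, PowerSeries.coeff_mk, Polynomial.finsetSum_coeff, Polynomial.coeff_smul,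
    Polynomial.coeff_X_pow, smul_eq_mul, mul_ite, mul_one, mul_zero, hcard, Finset.sum_ite_eq,
    Finset.mem_Icc]
  split_ifs with hj
  · rfl
  rcases Nat.eq_zero_or_pos j with rfl | hj0
  · rw [ferrers_eq_empty_of_two_mul_lt (by omega), Finset.card_empty, Nat.cast_zero]
  · rw [ferrers_eq_empty_of_mul_self_lt (by omega), Finset.card_empty, Nat.cast_zero]

theorem coeff_ferrersGF_zero : PowerSeries.coeff 0 ferrersGF = 0 := by
  simp [ferrersGF]

theorem coeff_ferrersGF_one : PowerSeries.coeff 1 ferrersGF = 0 := by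
  ext j
  rw [coeff_coeff_ferrersGF one_ne_zero, ferrers_one]
  simp

theorem coeff_ferrersGF_two : PowerSeries.coeff 2 ferrersGF = Polynomial.X := by
  ext j
  rw [coeff_coeff_ferrersGF two_ne_zero, card_ferrers_two, Polynomial.coeff_X]
  split_ifs <;> simp_all [eq_comm]

theorem coeff_ferrersGF_add_three (m : ℕ) :
    PowerSeries.coeff (m + 3) ferrersGF + Polynomial.X ^ 2 * PowerSeries.coeff (m + 1) ferrersGF =
      2 * Polynomial.X * PowerSeries.coeff (m + 2) ferrersGF +
        Polynomial.X ^ (m + 2) * PowerSeries.coeff (m + 1) ferrersGF := by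
  have hg : ∀ k j, (PowerSeries.coeff (k + 1) ferrersGF).coeff j = #(ferrers (k + 1) j) :=
    fun k => coeff_coeff_ferrersGF k.succ_ne_zero
  ext j
  rcases j with _ | _ | t
  · simp [hg, ferrers_eq_empty_of_two_mul_lt]
  · simp [mul_assoc, Polynomial.coeff_X_pow_mul', hg, ferrers_eq_empty_of_two_mul_lt]
  · have key : (#(ferrers (m + 3) (t + 2)) + #(ferrers (m + 1) t) : ℚ) =
        2 * #(ferrers (m + 2) (t + 1)) + #(ferrers (m + 1) (t - m)) := by
      exact_mod_cast card_ferrers_add_three m t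
    simp only [mul_assoc, Polynomial.coeff_add, Polynomial.coeff_ofNat_mul, Polynomial.coeff_X_mul,
      Polynomial.coeff_X_pow_mul', hg, if_pos (show 2 ≤ t + 1 + 1 by omega),
      show t + 1 + 1 - 2 = t by omega]
    split_ifs with h
    · rw [show t + 1 + 1 - (m + 2) = t - m by omega]
      linear_combination key
    · rw [show t - m = 0 by omega, ferrers_eq_empty_of_two_mul_lt (k := m + 1) (n := 0) (by omega),
        Finset.card_empty, Nat.cast_zero] at key
      linear_combination key

/-- With `G` the Ferrers-diagram generating function and `G(qx)`
obtained from `G` by the substitution `x ↦ q·x`, we have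
`q·x²·G(qx) - (1 - q·x)²·G + q·x² = 0` in `ℚ[q]⟦x⟧`. -/
theorem stmt_14 :
    PowerSeries.C (R := Polynomial ℚ) Polynomial.X * PowerSeries.X ^ 2 *
        PowerSeries.rescale Polynomial.X ferrersGF
      - (1 - PowerSeries.C (R := Polynomial ℚ) Polynomial.X * PowerSeries.X) ^ 2 * ferrersGF
      + PowerSeries.C (R := Polynomial ℚ) Polynomial.X * PowerSeries.X ^ 2 = 0 := by
  have hsq : (1 - PowerSeries.C (R := Polynomial ℚ) Polynomial.X * PowerSeries.X) ^ 2 * ferrersGF =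
      ferrersGF - PowerSeries.C (2 * Polynomial.X) * (PowerSeries.X * ferrersGF) +
        PowerSeries.C (Polynomial.X ^ 2) * (PowerSeries.X ^ 2 * ferrersGF) := by
    simp only [map_mul, map_pow, map_ofNat]
    ring
  ext1 n
  rw [hsq]
  simp only [map_add, map_sub, mul_assoc, PowerSeries.coeff_C_mul, PowerSeries.coeff_X_pow_mul',
    PowerSeries.coeff_rescale, PowerSeries.coeff_X_pow, map_zero]
  rcases n with _ | _ | _ | m
  · simp [coeff_ferrersGF_zero]
  · simp [coeff_ferrersGF_zero, coeff_ferrersGF_one]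
  · simp [coeff_ferrersGF_zero, coeff_ferrersGF_one, coeff_ferrersGF_two]
  · simp only [PowerSeries.coeff_succ_X_mul, if_pos (show 2 ≤ m + 1 + 1 + 1 by omega),
      if_neg (show m + 1 + 1 + 1 ≠ 2 by omega), show m + 1 + 1 + 1 - 2 = m + 1 by omega]
    linear_combination -coeff_ferrersGF_add_three m
end

section
/- There exists exactly one formal power series y in the ring ℚ[q]⟦x⟧ of formal power series in x with coefficients in the polynomial ring ℚ[q] such that y has zero constant term and y(qx)·y + (2·x·q - 1)·y + x²·q = 0, where y(qx) denotes the series obtained from y by the substitution x ↦ q·x. -/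
/-!
Writing `y = x • w`, which is possible exactly when `y` has zero constant term, the equation
becomes the fixed-point equation `w = q x (w(qx) w + 2 w + 1)`. Its right-hand side is a
contraction for the `x`-adic topology: if `w ≡ v mod xⁿ`, the images agree mod `xⁿ⁺¹`. Since
power series are `x`-adically complete, the iterates of the map from `0` converge to a fixed
point, and any two fixed points agree modulo every `xⁿ`.
-/

open PowerSeries

variable {R M : Type*} [CommRing R] [AddCommGroup M] [Module R M]

theorem SModEq.pow_zero_smul_top (I : Ideal R) (x y : M) :
    x ≡ y [SMOD (I ^ 0 • ⊤ : Submodule R M)] := by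
  simp [SModEq.top]

def IsAdicContraction (I : Ideal R) (F : M → M) : Prop :=
  ∀ n x y, x ≡ y [SMOD (I ^ n • ⊤ : Submodule R M)] →
    F x ≡ F y [SMOD (I ^ (n + 1) • ⊤ : Submodule R M)]

namespace IsAdicContraction

variable {I : Ideal R} {F : M → M}

theorem iterate_smodEq (hF : IsAdicContraction I F) (x y : M) (n : ℕ) :
    F^[n] x ≡ F^[n] y [SMOD (I ^ n • ⊤ : Submodule R M)] := by
  induction n with
  | zero => exact SModEq.pow_zero_smul_top I x y
  | succ n ih =>
    rw [Function.iterate_succ_apply', Function.iterate_succ_apply']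
    exact hF n _ _ ih

theorem eq_of_fixed [IsHausdorff I M] (hF : IsAdicContraction I F) {x y : M} (hx : F x = x)
    (hy : F y = y) : x = y :=
  (IsHausdorff.eq_iff_smodEq (I := I)).2 fun n ↦ by
    simpa only [Function.iterate_fixed hx, Function.iterate_fixed hy] using hF.iterate_smodEq x y n

theorem existsUnique_fixedPoint [IsAdicComplete I M] (hF : IsAdicContraction I F) :
    ∃! x, F x = x := by
  obtain ⟨L, hL⟩ := IsPrecomplete.prec (I := I) inferInstance
    ((AdicCompletion.isAdicCauchy_iff I M fun n ↦ F^[n] 0).2 fun n ↦ by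
      simpa only [← Function.iterate_succ_apply] using hF.iterate_smodEq 0 (F 0) n)
  have hFL : F L = L := by
    refine (IsHausdorff.eq_iff_smodEq (I := I)).2 fun n ↦ ?_
    cases n with
    | zero => exact SModEq.pow_zero_smul_top I _ _
    | succ n =>
      calc F L ≡ F (F^[n] 0) [SMOD (I ^ (n + 1) • ⊤ : Submodule R M)] := hF n _ _ (hL n).symm
        _ = F^[n + 1] 0 := (Function.iterate_succ_apply' F n 0).symm
        _ ≡ L [SMOD (I ^ (n + 1) • ⊤ : Submodule R M)] := hL (n + 1)
  exact ⟨L, hFL, fun _ hx ↦ hF.eq_of_fixed hx hFL⟩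

end IsAdicContraction

namespace PowerSeries

theorem smodEq_X_pow_iff {n : ℕ} {f g : R⟦X⟧} :
    f ≡ g [SMOD (Ideal.span {(X : R⟦X⟧)} ^ n • ⊤ : Submodule R⟦X⟧ R⟦X⟧)] ↔ X ^ n ∣ f - g := by
  rw [SModEq.sub_mem, Ideal.span_singleton_pow, smul_eq_mul, Ideal.mul_top,
    Ideal.mem_span_singleton]

theorem X_pow_dvd_rescale {n : ℕ} {f : R⟦X⟧} (a : R) (h : X ^ n ∣ f) : X ^ n ∣ rescale a f :=
  X_pow_dvd_iff.2 fun m hm ↦ by rw [coeff_rescale, X_pow_dvd_iff.1 h m hm, mul_zero]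

noncomputable def staircaseMap (a : R) (w : R⟦X⟧) : R⟦X⟧ :=
  X * C a * (rescale a w * w + 2 * w + 1)

theorem isAdicContraction_staircaseMap (a : R) :
    IsAdicContraction (Ideal.span {(X : R⟦X⟧)}) (staircaseMap a) := by
  intro n w v h
  rw [smodEq_X_pow_iff] at h ⊢
  have hquad : X ^ n ∣ rescale a w * w - rescale a v * v := by
    have : rescale a w * w - rescale a v * v = rescale a w * (w - v) + rescale a (w - v) * v := by
      rw [map_sub]; ring
    rw [this]
    exact dvd_add (dvd_mul_of_dvd_right h _) (dvd_mul_of_dvd_left (X_pow_dvd_rescale a h) _)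
  have hdiff : staircaseMap a w - staircaseMap a v
      = X * (C a * ((rescale a w * w - rescale a v * v) + 2 * (w - v))) := by
    unfold staircaseMap; ring
  rw [hdiff, pow_succ']
  exact mul_dvd_mul_left X (dvd_mul_of_dvd_right (dvd_add hquad (dvd_mul_of_dvd_right h 2)) _)

theorem staircase_eq_zero_iff (a : R) (w : R⟦X⟧) :
    rescale a (X * w) * (X * w) + (2 * X * C a - 1) * (X * w) + X ^ 2 * C a = 0 ↔
      staircaseMap a w = w := by
  have : rescale a (X * w) * (X * w) + (2 * X * C a - 1) * (X * w) + X ^ 2 * C a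
      = X * (staircaseMap a w - w) := by
    rw [staircaseMap, map_mul, rescale_X]; ring
  rw [this, ← mul_zero X, X_mul_inj, sub_eq_zero]

theorem existsUnique_staircase (a : R) :
    ∃! y : R⟦X⟧, constantCoeff y = 0 ∧
      rescale a y * y + (2 * X * C a - 1) * y + X ^ 2 * C a = 0 := by
  obtain ⟨w, hw, hw_unique⟩ := (isAdicContraction_staircaseMap a).existsUnique_fixedPoint
  refine ⟨X * w, ⟨by simp, (staircase_eq_zero_iff a w).2 hw⟩, ?_⟩
  rintro y ⟨hy₀, hy⟩
  obtain ⟨v, rfl⟩ := X_dvd_iff.2 hy₀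
  rw [hw_unique v ((staircase_eq_zero_iff a v).1 hy)]

end PowerSeries

/-- There is exactly one formal power series `y ∈ ℚ[q]⟦x⟧` with zero
constant term such that `y(qx)·y + (2·x·q - 1)·y + x²·q = 0`, where `y(qx)` is obtained
from `y` by the substitution `x ↦ q·x`. -/
theorem stmt_15 :
    ∃! y : PowerSeries (Polynomial ℚ),
      PowerSeries.constantCoeff y = 0 ∧
      PowerSeries.rescale Polynomial.X y * y
        + (2 * PowerSeries.X * PowerSeries.C Polynomial.X - 1) * y
        + PowerSeries.X ^ 2 * PowerSeries.C Polynomial.X = 0 :=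
  PowerSeries.existsUnique_staircase Polynomial.X
end
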